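/- For every integer n ≥ 0 and every natural number i with i < 2^n, one has pol_i(p_n) ≡ pol_i(q_n) (mod 2), where p_n is regarded as an element of ℤ[x_1,…,x_{n+1}]. -/
import Mathlib


open MvPolynomial

/-- `Φ n x₀ x = ∏_{I ⊆ {1,…,n}} (x₀ + ∑_{i ∈ I} x i)`. -/
def Phi {R : Type*} [CommRing R] (n : ℕ) (x0 : R) (x : ℕ → R) : R :=
  ∏ I ∈ (Finset.Icc 1 n).powerset, (x0 + ∑ i ∈ I, x i)

/-- `p_n = Φ_n(1; x₁,…,xₙ) ∈ ℤ[x₁,…,xₙ]`, regarded in `ℤ[x₁,…,x_{n+1}]`. -/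
noncomputable def pPol (n : ℕ) : MvPolynomial ℕ ℤ :=
  Phi n 1 fun i => X i

/-- `q_n = Φ_n(1 + x_{n+1}; x₁,…,xₙ) ∈ ℤ[x₁,…,x_{n+1}]`. -/
noncomputable def qPol (n : ℕ) : MvPolynomial ℕ ℤ :=
  Phi n (1 + X (n + 1)) fun i => X i

/-- Reduction of the integer coefficients mod `2`. -/
noncomputable def toF2 : MvPolynomial ℕ ℤ →+* MvPolynomial ℕ (ZMod 2) :=
  MvPolynomial.map (Int.castRingHom (ZMod 2))

lemma Phi_succ {R : Type*} [CommRing R] (n : ℕ) (x0 : R) (x : ℕ → R) :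
    Phi (n + 1) x0 x = Phi n x0 x * Phi n (x0 + x (n + 1)) x := by
  have h : Finset.Icc 1 (n + 1) = insert (n + 1) (Finset.Icc 1 n) := by
    ext a
    simp [Finset.mem_Icc, Finset.mem_insert, Nat.lt_succ_iff]
    omega
  rw [Phi, h, Finset.prod_powerset_insert (by simp)]
  congr 1
  apply Finset.prod_congr rfl
  intro I hI
  rw [Finset.sum_insert]
  · ring
  · intro hmem
    have := Finset.mem_powerset.mp hI hmem
    simp at this
lemma Phi_zero {R : Type*} [CommRing R] (x0 : R) (x : ℕ → R) : Phi 0 x0 x = x0 := by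
  simp [Phi]

/-- Additivity of `Φ_n` in the first argument, in characteristic 2. -/
lemma Phi_add {R : Type*} [CommRing R] (h2 : (2 : R) = 0) (n : ℕ) (a b : R) (x : ℕ → R) :
    Phi n (a + b) x = Phi n a x + Phi n b x := by
  induction n generalizing a b with
  | zero => simp [Phi_zero]
  | succ n ih =>
    rw [Phi_succ, Phi_succ, Phi_succ, ih a b]
    have h1 : Phi n (a + b + x (n + 1)) x
        = Phi n a x + Phi n b x + Phi n (x (n + 1)) x := by
      rw [show a + b + x (n+1) = a + (b + x (n+1)) by ring, ih, ih]; ring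
    have h2a : Phi n (a + x (n + 1)) x = Phi n a x + Phi n (x (n + 1)) x := ih _ _
    have h2b : Phi n (b + x (n + 1)) x = Phi n b x + Phi n (x (n + 1)) x := ih _ _
    rw [h1, h2a, h2b]
    linear_combination (Phi n a x * Phi n b x) * h2

lemma map_Phi {R S : Type*} [CommRing R] [CommRing S] (f : R →+* S) (n : ℕ) (x0 : R)
    (x : ℕ → R) : f (Phi n x0 x) = Phi n (f x0) (fun i => f (x i)) := by
  simp [Phi, map_prod, map_add, map_sum]

lemma toF2_homogeneousComponent (i : ℕ) (f : MvPolynomial ℕ ℤ) :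
    toF2 (homogeneousComponent i f) = homogeneousComponent i (toF2 f) := by
  ext d
  simp [toF2, coeff_map, coeff_homogeneousComponent]

lemma Phi_isHomogeneous (n : ℕ) :
    (Phi n (X (n + 1)) (fun i => X i) : MvPolynomial ℕ (ZMod 2)).IsHomogeneous (2 ^ n) := by
  have : (2 : ℕ) ^ n = ∑ _I ∈ (Finset.Icc 1 n).powerset, 1 := by
    simp [Finset.card_powerset, Nat.card_Icc]
  rw [this, Phi]
  apply MvPolynomial.IsHomogeneous.prod
  intro I _
  have hX : (X (n + 1) : MvPolynomial ℕ (ZMod 2)).IsHomogeneous 1 := isHomogeneous_X _ _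
  have hsum : (∑ i ∈ I, (X i : MvPolynomial ℕ (ZMod 2))).IsHomogeneous 1 :=
    MvPolynomial.IsHomogeneous.sum I _ 1 (fun i _ => isHomogeneous_X _ _)
  exact hX.add hsum

/-- For every `n ≥ 0` and every `i < 2^n`, the degree-`i` homogeneous components of
`p_n` and `q_n` are congruent mod `2`. -/
theorem stmt4 (n i : ℕ) (hi : i < 2 ^ n) :
    toF2 (homogeneousComponent i (pPol n)) = toF2 (homogeneousComponent i (qPol n)) := by
  rw [toF2_homogeneousComponent, toF2_homogeneousComponent]
  have h2 : (2 : MvPolynomial ℕ (ZMod 2)) = 0 := by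
    have := CharP.cast_eq_zero (MvPolynomial ℕ (ZMod 2)) 2
    exact_mod_cast this
  have hq : toF2 (qPol n) = toF2 (pPol n) + Phi n (X (n + 1)) (fun i => X i) := by
    rw [qPol, pPol, map_Phi, map_Phi]
    simp only [toF2, map_add, map_one, map_X]
    rw [Phi_add h2]
  rw [hq, map_add]
  have hz : homogeneousComponent i (Phi n (X (n + 1)) (fun i => X i) :
      MvPolynomial ℕ (ZMod 2)) = 0 := by
    rw [homogeneousComponent_of_mem ((mem_homogeneousSubmodule _ _).mpr
      (Phi_isHomogeneous n)), if_neg (Nat.ne_of_lt hi)]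
  rw [hz, add_zero]
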